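/- Let β ∈ [0,∞), γ ∈ (0,1], f ∈ H, and let (x_i)_{i≥1} be a weak β-greedy sequence for f with parameter γ. If for some n ≥ 1 and ε > 0 the closed absolutely convex hull acx(Φ(Ω)) admits an (n, ε)-cover, then min_{n+1 ≤ i ≤ 2n} ‖r_i‖_∞ ≤ γ^{−1} · (√5 · n^{(1−β)/2} · ε)^{1/max(1,β)} · ‖r_{n+1}‖_H. -/

import Mathlib

open scoped RealInnerProductSpace

variable {H : Type*} [NormedAddCommGroup H] [InnerProductSpace ℝ H] {Ω : Type*}

/-- The kernel interpolant `I_X f`: the orthogonal projection of `f` onto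
`V(X) = span {Φ(x) : x ∈ X}`. -/
noncomputable def interp (Φ : Ω → H) (X : Finset Ω) (f : H) : H :=
  haveI : FiniteDimensional ℝ (Submodule.span ℝ (Φ '' (X : Set Ω))) :=
    FiniteDimensional.span_of_finite ℝ (X.finite_toSet.image Φ)
  (Submodule.orthogonalProjection (Submodule.span ℝ (Φ '' (X : Set Ω))) f : H)

/-- The power function `P_X(z) = ‖Φ(z) − Π_{V(X)} Φ(z)‖`. -/
noncomputable def powerFun (Φ : Ω → H) (X : Finset Ω) (z : Ω) : ℝ :=
  ‖Φ z - interp Φ X (Φ z)‖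

/-- The sup norm `‖g‖_∞ = sup_{x ∈ Ω} |g(x)|`, where `g(x) = ⟪g, Φ(x)⟫`. -/
noncomputable def supNorm (Φ : Ω → H) (g : H) : ℝ := ⨆ x : Ω, |⟪g, Φ x⟫|

/-- `X_i = {x_1, …, x_i}` (so `X_0 = ∅`). -/
noncomputable def Xset (x : ℕ → Ω) (i : ℕ) : Finset Ω := by
  classical exact (Finset.Icc 1 i).image x

/-- `(x_i)_{i ≥ 1}` is a weak β-greedy sequence for `f` with parameter `γ`:
for every `i ≥ 0` and `z ∈ Ω`,
`γ · |r_i(z)|^β · P_{X_i}(z)^{1−β} ≤ |r_i(x_{i+1})|^β · P_{X_i}(x_{i+1})^{1−β}`,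
where `r_i = f − I_{X_i} f`. -/
def IsWeakGreedy (Φ : Ω → H) (f : H) (β γ : ℝ) (x : ℕ → Ω) : Prop :=
  ∀ (i : ℕ) (z : Ω),
    γ * |⟪f - interp Φ (Xset x i) f, Φ z⟫| ^ β * powerFun Φ (Xset x i) z ^ (1 - β)
      ≤ |⟪f - interp Φ (Xset x i) f, Φ (x (i + 1))⟫| ^ β
          * powerFun Φ (Xset x i) (x (i + 1)) ^ (1 - β)

/-- The closed absolutely convex (symmetric convex) hull of `K`. -/
def acx (K : Set H) : Set H :=
  closure {y : H | ∃ (m : ℕ) (c : Fin m → ℝ) (g : Fin m → H),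
    (∀ j, g j ∈ K) ∧ (∑ j, |c j|) ≤ 1 ∧ y = ∑ j, c j • g j}

/-- `S` admits an `(n, ε)`-cover: it can be covered by at most `2^n` closed balls of
radius `ε`. -/
def HasCover (S : Set H) (n : ℕ) (ε : ℝ) : Prop :=
  ∃ (q : ℕ) (y : Fin q → H), q ≤ 2 ^ n ∧ S ⊆ ⋃ j, Metric.closedBall (y j) ε

/-!
Write `c_i = P_{X_i}(x_{i+1})` and `d_i = I_{X_{i+1}} f - I_{X_i} f`. Since `r_i = r_{i+1} + d_i`
with `r_{i+1} ⟂ V(X_{i+1})`, one has `|r_i(x_{i+1})| ≤ c_i ‖d_i‖`, so the selection rule gives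
`γ |r_i(z)|^β P_{X_i}(z)^{1-β} ≤ c_i ‖d_i‖^β` for every `z`.

On the window `n+1 ≤ i ≤ 2n` both factors are controlled in product. The `d_i` are orthogonal
pieces of `r_{n+1}`, so `∏ ‖d_i‖ ≤ (‖r_{n+1}‖ / √n)^n` by AM–GM. The `c_i` are the diagonal of
the upper triangular matrix `⟪u_j, Φ(x_{k+1})⟫`, where `u_j` is the Newton basis. By
Cauchy–Schwarz and Bessel, this matrix maps the Euclidean unit ball into `√n` times the image of
`acx(Φ(Ω))` under the 1-Lipschitz map `v ↦ (⟪u_j, v⟫)_j`, which is covered by `2^n` balls of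
radius `√n ε`; comparing volumes gives `∏ c_i ≤ (2 √n ε)^n`.

Hence some `i` in the window has `c_i ‖d_i‖^β ≤ 2 n^{(1-β)/2} ε ‖r_{n+1}‖^β`, and solving the
selection inequality for `|r_i(z)|`, separately for `β ≤ 1` (using `|r_i(z)| ≤ ‖r_i‖ P_{X_i}(z)`)
and for `β ≥ 1` (using `P_{X_i}(z) ≤ 1`), gives the bound.
-/

open Metric Module MeasureTheory

section RealInequalities

theorem Real.rpow_mul_rpow_one_sub_le {a c d β : ℝ} (ha : 0 ≤ a) (hc : 0 ≤ c) (hd : 0 ≤ d)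
    (hβ : 0 ≤ β) (h : a ≤ c * d) : a ^ β * c ^ (1 - β) ≤ c * d ^ β := by
  rcases hc.eq_or_lt with rfl | hc
  · obtain rfl : a = 0 := le_antisymm (by simpa using h) ha
    rcases hβ.eq_or_lt with rfl | hβ
    · simp
    · simp [Real.zero_rpow hβ.ne']
  calc a ^ β * c ^ (1 - β) ≤ (c * d) ^ β * c ^ (1 - β) := by gcongr
    _ = c * d ^ β := by
      rw [Real.mul_rpow hc.le hd, mul_right_comm, ← Real.rpow_add hc, add_sub_cancel,
        Real.rpow_one]

theorem Real.prod_le_pow_of_sum_sq_le {ι : Type*} [Fintype ι] {a : ι → ℝ} {S : ℝ}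
    (hS : 0 ≤ S) (h : ∑ i, a i ^ 2 ≤ S ^ 2) :
    ∏ i, a i ≤ (S / √(Fintype.card ι)) ^ Fintype.card ι := by
  set N := Fintype.card ι
  rcases Nat.eq_zero_or_pos N with hN | hN
  · simp [N, Fintype.card_eq_zero_iff.1 hN]
  have hN' : (0 : ℝ) < N := by exact_mod_cast hN
  have hamgm := Real.geom_mean_le_arith_mean_weighted Finset.univ (fun _ => (N : ℝ)⁻¹)
    (fun i => a i ^ 2) (fun _ _ => by positivity) (by simp [N, hN'.ne']) (fun _ _ => by positivity)
  rw [Real.finsetProd_rpow _ _ fun i _ => sq_nonneg (a i), ← Finset.mul_sum,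
    Finset.prod_pow] at hamgm
  have hsq : (∏ i, a i) ^ 2 ≤ ((S / √N) ^ N) ^ 2 :=
    calc (∏ i, a i) ^ 2 = (((∏ i, a i) ^ 2) ^ (N⁻¹ : ℝ)) ^ N :=
          (Real.rpow_inv_natCast_pow (by positivity) hN.ne').symm
      _ ≤ ((N : ℝ)⁻¹ * S ^ 2) ^ N := by gcongr; exact hamgm.trans (by gcongr)
      _ = ((S / √N) ^ N) ^ 2 := by
          rw [← pow_mul, mul_comm N, pow_mul, div_pow, Real.sq_sqrt hN'.le, inv_mul_eq_div]
  exact le_of_pow_le_pow_left₀ two_ne_zero (by positivity) hsq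

theorem Real.exists_mul_rpow_le_of_prod_le {ι : Type*} [Fintype ι] [Nonempty ι] {a b : ι → ℝ}
    {A B β : ℝ} (ha : ∀ i, 0 ≤ a i) (hb : ∀ i, 0 ≤ b i) (hA : 0 ≤ A) (hB : 0 ≤ B) (hβ : 0 ≤ β)
    (hab : ∏ i, a i ≤ A ^ Fintype.card ι) (hbB : ∏ i, b i ≤ B ^ Fintype.card ι) :
    ∃ i, a i * b i ^ β ≤ A * B ^ β := by
  obtain ⟨i, -, hi⟩ :=
    Finset.exists_min_image Finset.univ (fun i => a i * b i ^ β) Finset.univ_nonempty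
  refine ⟨i, le_of_pow_le_pow_left₀ (Fintype.card_ne_zero (α := ι)) (by positivity) ?_⟩
  calc (a i * b i ^ β) ^ Fintype.card ι = ∏ _j : ι, a i * b i ^ β := by simp
    _ ≤ ∏ j, a j * b j ^ β :=
        Finset.prod_le_prod (fun _ _ => mul_nonneg (ha i) (Real.rpow_nonneg (hb i) β))
          fun j _ => hi j (Finset.mem_univ j)
    _ = (∏ j, a j) * (∏ j, b j) ^ β := by
        rw [Finset.prod_mul_distrib, Real.finsetProd_rpow _ _ fun j _ => hb j]
    _ ≤ A ^ Fintype.card ι * (B ^ Fintype.card ι) ^ β :=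
        mul_le_mul hab (Real.rpow_le_rpow (Finset.prod_nonneg fun j _ => hb j) hbB hβ)
          (Real.rpow_nonneg (Finset.prod_nonneg fun j _ => hb j) β) (by positivity)
    _ = (A * B ^ β) ^ Fintype.card ι := by
        rw [mul_pow, ← Real.rpow_natCast (B ^ β), ← Real.rpow_mul hB, mul_comm β,
          Real.rpow_mul hB, Real.rpow_natCast]

theorem Real.le_of_rpow_mul_rpow_le_of_le_one {a p N R γ β C : ℝ} (ha : 0 ≤ a) (hp : 0 ≤ p)
    (hN : 0 ≤ N) (haN : a ≤ N * p) (hNR : N ≤ R) (hγ : 0 < γ) (hβ : β ≤ 1)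
    (h : γ * a ^ β * p ^ (1 - β) ≤ C * R ^ β) : a ≤ γ⁻¹ * C * R := by
  have hsplit : ∀ t : ℝ, 0 ≤ t → t ^ β * t ^ (1 - β) = t := fun t ht => by
    rw [← Real.rpow_add' ht (by norm_num), add_sub_cancel, Real.rpow_one]
  have hCR : 0 ≤ C * R ^ β := le_trans (by positivity) h
  rw [mul_assoc, le_inv_mul_iff₀ hγ]
  calc γ * a = γ * (a ^ β * a ^ (1 - β)) := by rw [hsplit a ha]
    _ ≤ γ * (a ^ β * (N ^ (1 - β) * p ^ (1 - β))) := by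
        rw [← Real.mul_rpow hN hp]
        gcongr
    _ = N ^ (1 - β) * (γ * a ^ β * p ^ (1 - β)) := by ring
    _ ≤ R ^ (1 - β) * (C * R ^ β) :=
        mul_le_mul (Real.rpow_le_rpow hN hNR (by linarith)) h (by positivity)
          (Real.rpow_nonneg (hN.trans hNR) _)
    _ = C * R := by rw [mul_left_comm, mul_comm (R ^ (1 - β)), hsplit R (hN.trans hNR)]

theorem Real.le_of_rpow_mul_rpow_le_of_one_le {a p N R γ β C : ℝ} (ha : 0 ≤ a) (hp0 : 0 ≤ p)
    (hp1 : p ≤ 1) (haN : a ≤ N * p) (hR : 0 ≤ R) (hγ0 : 0 < γ) (hγ1 : γ ≤ 1) (hβ : 1 ≤ β)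
    (hC : 0 ≤ C) (h : γ * a ^ β * p ^ (1 - β) ≤ C * R ^ β) : a ≤ γ⁻¹ * C ^ (1 / β) * R := by
  rcases hp0.eq_or_lt with rfl | hp
  · rw [le_antisymm (by simpa using haN) ha]
    positivity
  have hβ0 : 0 < β := by linarith
  have hpow : a ^ β ≤ γ⁻¹ * C * R ^ β := by
    rw [mul_assoc, le_inv_mul_iff₀ hγ0]
    refine le_trans ?_ h
    exact le_mul_of_one_le_right (by positivity)
      (Real.one_le_rpow_of_pos_of_le_one_of_nonpos hp hp1 (by linarith))
  have hroot : a ≤ (γ⁻¹ * C) ^ (1 / β) * R := by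
    rw [← Real.rpow_le_rpow_iff ha (by positivity) hβ0, Real.mul_rpow (by positivity) hR,
      ← Real.rpow_mul (by positivity), one_div_mul_cancel hβ0.ne', Real.rpow_one]
    exact hpow
  calc a ≤ (γ⁻¹ * C) ^ (1 / β) * R := hroot
    _ = γ⁻¹ ^ (1 / β) * C ^ (1 / β) * R := by rw [Real.mul_rpow (by positivity) hC]
    _ ≤ γ⁻¹ ^ (1 : ℝ) * C ^ (1 / β) * R := by
        gcongr
        · exact one_le_inv₀ hγ0 |>.2 hγ1
        · exact (div_le_one hβ0).2 hβ
    _ = γ⁻¹ * C ^ (1 / β) * R := by rw [Real.rpow_one]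

theorem Real.le_of_rpow_mul_rpow_le {a p N R γ β C : ℝ} (ha : 0 ≤ a) (hp0 : 0 ≤ p)
    (hp1 : p ≤ 1) (hN : 0 ≤ N) (haN : a ≤ N * p) (hNR : N ≤ R) (hγ0 : 0 < γ) (hγ1 : γ ≤ 1)
    (hC : 0 ≤ C) (h : γ * a ^ β * p ^ (1 - β) ≤ C * R ^ β) :
    a ≤ γ⁻¹ * C ^ (1 / max 1 β) * R := by
  rcases le_total β 1 with hβ | hβ
  · rw [max_eq_left hβ, div_one, Real.rpow_one]
    exact le_of_rpow_mul_rpow_le_of_le_one ha hp0 hN haN hNR hγ0 hβ h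
  · rw [max_eq_right hβ]
    exact le_of_rpow_mul_rpow_le_of_one_le ha hp0 hp1 haN (hN.trans hNR) hγ0 hγ1 hβ hC h

theorem Real.two_mul_sqrt_mul_div_sqrt_rpow_le {t ε R β : ℝ} (ht : 0 < t) (hε : 0 ≤ ε)
    (hR : 0 ≤ R) : 2 * √t * ε * (R / √t) ^ β ≤ √5 * t ^ ((1 - β) / 2) * ε * R ^ β := by
  have hsqrt : 0 < √t := Real.sqrt_pos.2 ht
  have hexp : √t * (R / √t) ^ β = t ^ ((1 - β) / 2) * R ^ β := by
    rw [Real.div_rpow hR hsqrt.le, mul_div_left_comm, mul_comm, Real.sqrt_eq_rpow,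
      ← Real.rpow_mul ht.le, ← Real.rpow_sub ht]
    ring_nf
  have h25 : (2 : ℝ) ≤ √5 := Real.le_sqrt_of_sq_le (by norm_num)
  calc 2 * √t * ε * (R / √t) ^ β = 2 * (t ^ ((1 - β) / 2) * R ^ β) * ε := by
        rw [← hexp]; ring
    _ ≤ √5 * (t ^ ((1 - β) / 2) * R ^ β) * ε := by gcongr
    _ = √5 * t ^ ((1 - β) / 2) * ε * R ^ β := by ring

end RealInequalities

theorem LinearMap.abs_det_le_of_image_closedBall_subset {E : Type*} [NormedAddCommGroup E]
    [NormedSpace ℝ E] [FiniteDimensional ℝ E] [MeasurableSpace E] [BorelSpace E] {q : ℕ}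
    (T : E →ₗ[ℝ] E) (y : Fin q → E) {s : ℝ}
    (hT : T '' closedBall 0 1 ⊆ ⋃ j, closedBall (y j) s) :
    |LinearMap.det T| ≤ q * s ^ finrank ℝ E := by
  let μ : Measure E := Measure.addHaar
  have hs : 0 ≤ s := by
    obtain ⟨j, hj⟩ := Set.mem_iUnion.1 (hT ⟨0, mem_closedBall_self zero_le_one, map_zero T⟩)
    exact dist_nonneg.trans hj
  have hB0 : μ (closedBall 0 1) ≠ 0 := (measure_closedBall_pos μ 0 one_pos).ne'
  have hBtop : μ (closedBall 0 1) ≠ ⊤ := measure_closedBall_lt_top.ne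
  have hvol : ENNReal.ofReal |LinearMap.det T| * μ (closedBall 0 1)
      ≤ ENNReal.ofReal (q * s ^ finrank ℝ E) * μ (closedBall 0 1) := by
    calc ENNReal.ofReal |LinearMap.det T| * μ (closedBall 0 1)
        = μ (T '' closedBall 0 1) := (Measure.addHaar_image_linearMap μ T _).symm
      _ ≤ ∑ j, μ (closedBall (y j) s) := (measure_mono hT).trans (measure_iUnion_fintype_le μ _)
      _ = ENNReal.ofReal (q * s ^ finrank ℝ E) * μ (closedBall 0 1) := by
        simp only [Measure.addHaar_closedBall' μ _ hs, Finset.sum_const, Finset.card_univ,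
          Fintype.card_fin, nsmul_eq_mul, ENNReal.ofReal_mul (Nat.cast_nonneg q),
          ENNReal.ofReal_natCast, mul_assoc]
  exact (ENNReal.ofReal_le_ofReal_iff (by positivity)).1
    ((ENNReal.mul_le_mul_iff_left hB0 hBtop).1 hvol)

theorem Orthonormal.norm_toLp_inner_le {ι : Type*} [Fintype ι] {u : ι → H}
    (hu : Orthonormal ℝ u) (v : H) :
    ‖(WithLp.toLp 2 fun j => ⟪u j, v⟫ : EuclideanSpace ℝ ι)‖ ≤ ‖v‖ := by
  rw [EuclideanSpace.norm_eq, Real.sqrt_le_left (norm_nonneg _)]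
  simpa using hu.sum_inner_products_le v (s := Finset.univ)

theorem EuclideanSpace.sum_abs_le_sqrt_card_mul_norm {n : ℕ} (l : EuclideanSpace ℝ (Fin n)) :
    ∑ k, |l k| ≤ √n * ‖l‖ := by
  rw [← Real.sqrt_sq (norm_nonneg l), ← Real.sqrt_mul n.cast_nonneg,
    Real.le_sqrt (by positivity) (by positivity), EuclideanSpace.norm_sq_eq]
  simpa using sq_sum_le_card_mul_sum_sq (s := Finset.univ) (f := fun k => |l k|)

theorem Orthonormal.abs_det_inner_le_of_cover {n q : ℕ} {u z : Fin n → H}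
    (hu : Orthonormal ℝ u) (y : Fin q → H) (hq : q ≤ 2 ^ n) {ε : ℝ}
    (hcov : ∀ l : Fin n → ℝ, ∑ k, |l k| ≤ 1 → ∃ j, ‖∑ k, l k • z k - y j‖ ≤ ε) :
    |(Matrix.of fun j k => ⟪u j, z k⟫).det| ≤ (2 * √n * ε) ^ n := by
  rcases Nat.eq_zero_or_pos n with rfl | hn
  · simp
  have hε : 0 ≤ ε := by
    obtain ⟨j, hj⟩ := hcov 0 (by simp)
    exact (norm_nonneg _).trans hj
  have hsqrt : 0 < √(n : ℝ) := Real.sqrt_pos.2 (by exact_mod_cast hn)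
  set M := Matrix.of fun j k => ⟪u j, z k⟫
  let π : H → EuclideanSpace ℝ (Fin n) := fun v => WithLp.toLp 2 fun j => ⟪u j, v⟫
  have hT : M.toLpLin 2 2 '' closedBall 0 1 ⊆ ⋃ j, closedBall (√n • π (y j)) (√n * ε) := by
    rintro - ⟨l, hl, rfl⟩
    have hl1 : ∑ k, |l k / √n| ≤ 1 := by
      simp only [abs_div, abs_of_pos hsqrt, ← Finset.sum_div]
      rw [div_le_one hsqrt]
      simpa using (EuclideanSpace.sum_abs_le_sqrt_card_mul_norm l).trans
        (mul_le_of_le_one_right hsqrt.le (mem_closedBall_zero_iff.1 hl))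
    obtain ⟨j, hj⟩ := hcov _ hl1
    have hTl : M.toLpLin 2 2 l - √n • π (y j) = √n • π (∑ k, (l k / √n) • z k - y j) := by
      ext i
      simp only [Matrix.toLpLin_apply, π, M, WithLp.ofLp_sub, WithLp.ofLp_smul, Pi.sub_apply,
        Pi.smul_apply, smul_eq_mul, Matrix.mulVec, dotProduct, Matrix.of_apply, inner_sub_right,
        inner_sum, real_inner_smul_right, mul_sub, Finset.mul_sum]
      congr 1
      refine Finset.sum_congr rfl fun k _ => ?_
      field_simp
    refine Set.mem_iUnion.2 ⟨j, ?_⟩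
    rw [mem_closedBall, dist_eq_norm, hTl, norm_smul, Real.norm_of_nonneg hsqrt.le]
    exact mul_le_mul_of_nonneg_left ((hu.norm_toLp_inner_le _).trans hj) hsqrt.le
  have hdet := (M.toLpLin 2 2).abs_det_le_of_image_closedBall_subset _ hT
  rw [LinearMap.det_toLpLin, finrank_euclideanSpace_fin] at hdet
  calc |M.det| ≤ q * (√n * ε) ^ n := hdet
    _ ≤ 2 ^ n * (√n * ε) ^ n := by gcongr; exact_mod_cast hq
    _ = (2 * √n * ε) ^ n := by ring

section Interpolation

variable {Φ : Ω → H} {X Y : Finset Ω} {f v : H} {z : Ω}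

variable (Φ X) in
abbrev kernelSpan : Submodule ℝ H := Submodule.span ℝ (Φ '' (X : Set Ω))

instance : FiniteDimensional ℝ (kernelSpan Φ X) :=
  FiniteDimensional.span_of_finite ℝ (X.finite_toSet.image Φ)

theorem interp_eq_starProjection : interp Φ X f = (kernelSpan Φ X).starProjection f := rfl

theorem interp_mem_kernelSpan : interp Φ X f ∈ kernelSpan Φ X :=
  Submodule.starProjection_apply_mem _ f

theorem apply_mem_kernelSpan (hz : z ∈ X) : Φ z ∈ kernelSpan Φ X :=
  Submodule.subset_span ⟨z, hz, rfl⟩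

theorem kernelSpan_mono (h : X ⊆ Y) : kernelSpan Φ X ≤ kernelSpan Φ Y :=
  Submodule.span_mono (Set.image_mono (Finset.coe_subset.2 h))

theorem inner_sub_interp_eq_zero (hv : v ∈ kernelSpan Φ X) : ⟪f - interp Φ X f, v⟫ = 0 :=
  Submodule.starProjection_inner_eq_zero f v hv

theorem inner_sub_interp_eq_inner_sub_interp :
    ⟪f - interp Φ X f, v⟫ = ⟪f - interp Φ X f, v - interp Φ X v⟫ := by
  rw [inner_sub_right, inner_sub_interp_eq_zero interp_mem_kernelSpan, sub_zero]

theorem norm_sub_interp_le (hv : v ∈ kernelSpan Φ X) : ‖f - interp Φ X f‖ ≤ ‖f - v‖ := by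
  rw [interp_eq_starProjection, Submodule.starProjection_minimal]
  have hbdd : BddBelow (Set.range fun w : kernelSpan Φ X => ‖f - w‖) :=
    ⟨0, by rintro _ ⟨w, rfl⟩; exact norm_nonneg _⟩
  exact ciInf_le hbdd ⟨v, hv⟩

theorem norm_sub_interp_antitone (h : X ⊆ Y) : ‖f - interp Φ Y f‖ ≤ ‖f - interp Φ X f‖ :=
  norm_sub_interp_le (kernelSpan_mono h interp_mem_kernelSpan)

theorem norm_sub_interp_sq_eq (h : X ⊆ Y) :
    ‖f - interp Φ X f‖ ^ 2 = ‖f - interp Φ Y f‖ ^ 2 + ‖interp Φ Y f - interp Φ X f‖ ^ 2 := by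
  have horth : ⟪f - interp Φ Y f, interp Φ Y f - interp Φ X f⟫ = 0 :=
    inner_sub_interp_eq_zero (Submodule.sub_mem _ interp_mem_kernelSpan
      (kernelSpan_mono h interp_mem_kernelSpan))
  rw [← sub_add_sub_cancel f (interp Φ Y f), norm_add_sq_real, horth]
  ring

theorem powerFun_nonneg : 0 ≤ powerFun Φ X z := norm_nonneg _

theorem powerFun_le_one (hz : ‖Φ z‖ ≤ 1) : powerFun Φ X z ≤ 1 := by
  have h := norm_sub_interp_le (f := Φ z) (Submodule.zero_mem (kernelSpan Φ X))
  rw [sub_zero] at h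
  exact h.trans hz

theorem abs_inner_sub_interp_le_norm_mul_powerFun :
    |⟪f - interp Φ X f, Φ z⟫| ≤ ‖f - interp Φ X f‖ * powerFun Φ X z := by
  rw [inner_sub_interp_eq_inner_sub_interp]
  exact abs_real_inner_le_norm _ _

theorem abs_inner_sub_interp_le_powerFun_mul_norm (h : X ⊆ Y) (hz : z ∈ Y) :
    |⟪f - interp Φ X f, Φ z⟫| ≤ powerFun Φ X z * ‖interp Φ Y f - interp Φ X f‖ := by
  have hw : Φ z - interp Φ X (Φ z) ∈ kernelSpan Φ Y :=
    Submodule.sub_mem _ (apply_mem_kernelSpan hz) (kernelSpan_mono h interp_mem_kernelSpan)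
  have hsplit : ⟪f - interp Φ X f, Φ z⟫
      = ⟪interp Φ Y f - interp Φ X f, Φ z - interp Φ X (Φ z)⟫ := by
    rw [inner_sub_interp_eq_inner_sub_interp, ← sub_add_sub_cancel f (interp Φ Y f),
      inner_add_left, inner_sub_interp_eq_zero hw, zero_add]
  rw [hsplit, mul_comm]
  exact abs_real_inner_le_norm _ _

theorem inner_sub_interp_apply_self :
    ⟪Φ z - interp Φ X (Φ z), Φ z⟫ = powerFun Φ X z ^ 2 := by
  rw [inner_sub_interp_eq_inner_sub_interp, real_inner_self_eq_norm_sq, powerFun]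

end Interpolation

section GreedySequence

variable {Φ : Ω → H} {x : ℕ → Ω} {f : H}

theorem Xset_mono {i j : ℕ} (h : i ≤ j) : Xset x i ⊆ Xset x j := by
  classical exact Finset.image_subset_image (Finset.Icc_subset_Icc_right h)

theorem mem_Xset_succ (i : ℕ) : x (i + 1) ∈ Xset x (i + 1) := by
  classical exact Finset.mem_image.2 ⟨i + 1, Finset.mem_Icc.2 ⟨by omega, le_rfl⟩, rfl⟩

theorem sum_norm_interp_succ_sub_sq_le (m n : ℕ) :
    ∑ k : Fin n, ‖interp Φ (Xset x (m + k + 1)) f - interp Φ (Xset x (m + k)) f‖ ^ 2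
      ≤ ‖f - interp Φ (Xset x m) f‖ ^ 2 := by
  have hstep : ∀ i, ‖interp Φ (Xset x (i + 1)) f - interp Φ (Xset x i) f‖ ^ 2
      = ‖f - interp Φ (Xset x i) f‖ ^ 2 - ‖f - interp Φ (Xset x (i + 1)) f‖ ^ 2 := fun i => by
    rw [norm_sub_interp_sq_eq (Xset_mono i.le_succ)]
    ring
  rw [Fin.sum_univ_eq_sum_range (fun k => ‖interp Φ (Xset x (m + k + 1)) f
    - interp Φ (Xset x (m + k)) f‖ ^ 2), Finset.sum_congr rfl fun k _ => hstep (m + k)]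
  refine (Finset.sum_range_sub' (fun k => ‖f - interp Φ (Xset x (m + k)) f‖ ^ 2) n).trans_le ?_
  simp only [add_zero, sub_le_self_iff]
  positivity

/-- The Newton basis of kernel interpolation: the Gram–Schmidt orthonormalization of
`Φ(x_1), Φ(x_2), …`. -/
noncomputable def newtonBasis (Φ : Ω → H) (x : ℕ → Ω) (i : ℕ) : H :=
  (powerFun Φ (Xset x i) (x (i + 1)))⁻¹ • (Φ (x (i + 1)) - interp Φ (Xset x i) (Φ (x (i + 1))))

theorem inner_newtonBasis_eq_zero {i : ℕ} {v : H} (hv : v ∈ kernelSpan Φ (Xset x i)) :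
    ⟪newtonBasis Φ x i, v⟫ = 0 := by
  rw [newtonBasis, real_inner_smul_left, inner_sub_interp_eq_zero hv, mul_zero]

theorem newtonBasis_mem_kernelSpan (i : ℕ) : newtonBasis Φ x i ∈ kernelSpan Φ (Xset x (i + 1)) :=
  Submodule.smul_mem _ _ (Submodule.sub_mem _ (apply_mem_kernelSpan (mem_Xset_succ i))
    (kernelSpan_mono (Xset_mono i.le_succ) interp_mem_kernelSpan))

theorem inner_newtonBasis_apply {i : ℕ} (hP : powerFun Φ (Xset x i) (x (i + 1)) ≠ 0) :
    ⟪newtonBasis Φ x i, Φ (x (i + 1))⟫ = powerFun Φ (Xset x i) (x (i + 1)) := by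
  rw [newtonBasis, real_inner_smul_left, inner_sub_interp_apply_self]
  field_simp

theorem norm_newtonBasis {i : ℕ} (hP : powerFun Φ (Xset x i) (x (i + 1)) ≠ 0) :
    ‖newtonBasis Φ x i‖ = 1 := by
  rw [newtonBasis, norm_smul, norm_inv, Real.norm_of_nonneg powerFun_nonneg]
  exact inv_mul_cancel₀ hP

theorem orthonormal_newtonBasis_comp {ι : Type*} {e : ι → ℕ} (he : Function.Injective e)
    (hP : ∀ k, powerFun Φ (Xset x (e k)) (x (e k + 1)) ≠ 0) :
    Orthonormal ℝ (newtonBasis Φ x ∘ e) := by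
  have hlt : ∀ {i j : ℕ}, i < j → ⟪newtonBasis Φ x j, newtonBasis Φ x i⟫ = 0 := fun h =>
    inner_newtonBasis_eq_zero (kernelSpan_mono (Xset_mono h) (newtonBasis_mem_kernelSpan _))
  refine ⟨fun k => norm_newtonBasis (hP k), fun j k hjk => ?_⟩
  change ⟪newtonBasis Φ x (e j), newtonBasis Φ x (e k)⟫ = 0
  rcases (he.ne hjk).lt_or_gt with h | h
  · rw [real_inner_comm, hlt h]
  · exact hlt h

theorem prod_powerFun_le_of_hasCover {n : ℕ} {ε : ℝ} (hε : 0 ≤ ε)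
    (hcov : HasCover (acx (Set.range Φ)) n ε) (m : ℕ) :
    ∏ k : Fin n, powerFun Φ (Xset x (m + k)) (x (m + k + 1)) ≤ (2 * √n * ε) ^ n := by
  by_cases h0 : ∃ k : Fin n, powerFun Φ (Xset x (m + k)) (x (m + k + 1)) = 0
  · obtain ⟨k, hk⟩ := h0
    rw [Finset.prod_eq_zero (Finset.mem_univ k) hk]
    positivity
  push Not at h0
  set z : Fin n → H := fun k => Φ (x (m + k + 1))
  set u : Fin n → H := fun k => newtonBasis Φ x (m + k)
  have hu : Orthonormal ℝ u :=
    orthonormal_newtonBasis_comp (e := fun k : Fin n => m + k)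
      (fun j k h => Fin.ext (Nat.add_left_cancel h)) h0
  have htri : (Matrix.of fun j k => ⟪u j, z k⟫).IsUpperTriangular := fun j k hkj =>
    inner_newtonBasis_eq_zero
      (kernelSpan_mono (Xset_mono (Nat.add_lt_add_left hkj m))
        (apply_mem_kernelSpan (mem_Xset_succ _)))
  obtain ⟨q, y, hq, hsub⟩ := hcov
  have hdet := hu.abs_det_inner_le_of_cover (z := z) y hq fun l hl => by
    have hmem : ∑ k, l k • z k ∈ acx (Set.range Φ) :=
      subset_closure ⟨n, l, z, fun k => ⟨_, rfl⟩, hl, rfl⟩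
    obtain ⟨j, hj⟩ := Set.mem_iUnion.1 (hsub hmem)
    exact ⟨j, by rwa [mem_closedBall, dist_eq_norm] at hj⟩
  simp only [Matrix.det_of_isUpperTriangular htri, Matrix.of_apply, u, z,
    inner_newtonBasis_apply (h0 _)] at hdet
  rwa [abs_of_nonneg (Finset.prod_nonneg fun k _ => powerFun_nonneg)] at hdet

theorem IsWeakGreedy.selection_le {β γ : ℝ} (hx : IsWeakGreedy Φ f β γ x) (hβ : 0 ≤ β)
    (i : ℕ) (z : Ω) :
    γ * |⟪f - interp Φ (Xset x i) f, Φ z⟫| ^ β * powerFun Φ (Xset x i) z ^ (1 - β)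
      ≤ powerFun Φ (Xset x i) (x (i + 1))
          * ‖interp Φ (Xset x (i + 1)) f - interp Φ (Xset x i) f‖ ^ β :=
  (hx i z).trans (Real.rpow_mul_rpow_one_sub_le (abs_nonneg _) (norm_nonneg _) (norm_nonneg _) hβ
    (abs_inner_sub_interp_le_powerFun_mul_norm (Xset_mono i.le_succ) (mem_Xset_succ i)))

end GreedySequence

theorem statement_6 [Nonempty Ω]
    (Φ : Ω → H) (hΦ : ∀ z : Ω, ‖Φ z‖ ≤ 1)
    (β γ : ℝ) (hβ : 0 ≤ β) (hγ0 : 0 < γ) (hγ1 : γ ≤ 1)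
    (f : H) (x : ℕ → Ω) (hx : IsWeakGreedy Φ f β γ x)
    (n : ℕ) (hn : 1 ≤ n) (ε : ℝ) (hε : 0 < ε)
    (hcov : HasCover (acx (Set.range Φ)) n ε) :
    (Finset.Icc (n + 1) (2 * n)).inf' (Finset.nonempty_Icc.mpr (by omega))
        (fun i => supNorm Φ (f - interp Φ (Xset x i) f))
      ≤ γ⁻¹ * (Real.sqrt 5 * (n : ℝ) ^ ((1 - β) / 2) * ε) ^ (1 / max 1 β)
          * ‖f - interp Φ (Xset x (n + 1)) f‖ := by
  set R := ‖f - interp Φ (Xset x (n + 1)) f‖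
  have : Nonempty (Fin n) := ⟨⟨0, hn⟩⟩
  have hprod_c := prod_powerFun_le_of_hasCover (x := x) hε.le hcov (n + 1)
  have hprod_d := Real.prod_le_pow_of_sum_sq_le (norm_nonneg _)
    (sum_norm_interp_succ_sub_sq_le (Φ := Φ) (x := x) (f := f) (n + 1) n)
  obtain ⟨k, hk⟩ := Real.exists_mul_rpow_le_of_prod_le (A := 2 * √n * ε) (B := R / √n)
    (fun _ => norm_nonneg _) (fun _ => norm_nonneg _) (by positivity) (by positivity) hβ
    (hprod_c.trans_eq (by rw [Fintype.card_fin])) (hprod_d.trans_eq (by rw [Fintype.card_fin]))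
  have hi : n + 1 + k ∈ Finset.Icc (n + 1) (2 * n) :=
    Finset.mem_Icc.2 ⟨by omega, by have := k.isLt; omega⟩
  refine (Finset.inf'_le _ hi).trans (ciSup_le fun z => ?_)
  refine Real.le_of_rpow_mul_rpow_le (abs_nonneg _) (norm_nonneg _) (powerFun_le_one (hΦ z))
    (norm_nonneg _) abs_inner_sub_interp_le_norm_mul_powerFun
    (norm_sub_interp_antitone (Xset_mono (by omega))) hγ0 hγ1 (by positivity)
    ((hx.selection_le hβ _ z).trans (hk.trans ?_))
  exact Real.two_mul_sqrt_mul_div_sqrt_rpow_le (Nat.cast_pos.2 hn) hε.le (norm_nonneg _)
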